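/- Let M be an n-cluster tilting subcategory of mod-Λ. The functor Θ : F(M) → mod-M̲ sending an epimorphism f : M₁ → M₂ in M to the cokernel of M(-, f) is full, dense and objective; it induces an equivalence F(M)/V′ ≃ mod-M̲, where V′ is generated by objects (M --1--> M) and (M → 0). -/

import Mathlib

open CategoryTheory CategoryTheory.Limits Opposite

noncomputable section

namespace Paper

/-! ### Generalities: objective functors, ideals, quotient categories -/

/-- A functor is *objective* if every morphism killed by it factors through an
object killed by it. -/
def Objective {C D : Type*} [Category C] [Category D] [HasZeroMorphisms D]
    (F : C ⥤ D) : Prop :=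
  ∀ ⦃X Y : C⦄ (f : X ⟶ Y), F.map f = 0 →
    ∃ (K : C) (g : X ⟶ K) (h : K ⟶ Y), g ≫ h = f ∧ IsZero (F.obj K)

/-- A functor is *dense* if it is essentially surjective. -/
def Dense {C D : Type*} [Category C] [Category D] (F : C ⥤ D) : Prop :=
  ∀ Y : D, ∃ X : C, Nonempty (F.obj X ≅ Y)

/-- A morphism factors through an object satisfying `K`. -/
def FactorsThru {C : Type*} [Category C] (K : C → Prop) {X Y : C} (f : X ⟶ Y) : Prop :=
  ∃ (Z : C) (g : X ⟶ Z) (h : Z ⟶ Y), K Z ∧ g ≫ h = f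

/-- The closure of a class of objects under isomorphism, zero objects and finite
biproducts (direct sums). -/
inductive AddClosure {C : Type*} [Category C] [Preadditive C] (K : C → Prop) : C → Prop
  | of {X : C} (h : K X) : AddClosure K X
  | zero {X : C} (h : IsZero X) : AddClosure K X
  | biprod {X Y Z : C} (hX : AddClosure K X) (hY : AddClosure K Y)
      (i₁ : X ⟶ Z) (i₂ : Y ⟶ Z) (p₁ : Z ⟶ X) (p₂ : Z ⟶ Y)
      (h₁ : i₁ ≫ p₁ = 𝟙 X) (h₂ : i₂ ≫ p₂ = 𝟙 Y)
      (h : p₁ ≫ i₁ + p₂ ≫ i₂ = 𝟙 Z) : AddClosure K Z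

/-- The ideal of morphisms factoring through finite direct sums of objects of `K`,
as a `HomRel`. -/
def idealRel {C : Type*} [Category C] [Preadditive C] (K : C → Prop) : HomRel C :=
  fun _ _ f g => FactorsThru (AddClosure K) (f - g)

/-- `F : C ⥤ D` induces an equivalence `C/⟨K⟩ ≃ D`. -/
def InducesEquivalence {C D : Type*} [Category C] [Category D] [Preadditive C]
    (K : C → Prop) (F : C ⥤ D) : Prop :=
  ∃ E : Quotient (idealRel K) ⥤ D, Quotient.functor (idealRel K) ⋙ E = F ∧ E.IsEquivalence

/-- Iterates of an endofunctor. -/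
def iterFun {C : Type*} [Category C] (F : C ⥤ C) : ℕ → (C ⥤ C)
  | 0 => 𝟭 C
  | (k + 1) => iterFun F k ⋙ F

/-- The cokernel functor from the morphism category of an abelian category. -/
def cokerFunctor (C : Type*) [Category C] [Abelian C] : ComposableArrows C 1 ⥤ C where
  obj X := cokernel (X.map' 0 1)
  map {X Y} φ := cokernel.map _ _ (φ.app 0) (φ.app 1) (φ.naturality (homOfLE (by decide)))
  map_id X := by apply coequalizer.hom_ext; simp
  map_comp {X Y Z} φ ψ := by apply coequalizer.hom_ext; simp

/-- An object is a direct summand of another. -/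
def IsSummand {C : Type*} [Category C] (X Y : C) : Prop :=
  ∃ (s : X ⟶ Y) (r : Y ⟶ X), s ≫ r = 𝟙 X

/-! ### The module-theoretic set-up -/

variable (Λ : Type) [Ring Λ]

/-- `π : M ⟶ X` is a right `P`-approximation. -/
def IsRightApprox (P : ModuleCat.{0} Λ → Prop) {M X : ModuleCat.{0} Λ} (π : M ⟶ X) : Prop :=
  P M ∧ ∀ N : ModuleCat.{0} Λ, P N → ∀ g : N ⟶ X, ∃ h : N ⟶ M, h ≫ π = g

/-- `ι : X ⟶ M` is a left `P`-approximation. -/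
def IsLeftApprox (P : ModuleCat.{0} Λ → Prop) {X M : ModuleCat.{0} Λ} (ι : X ⟶ M) : Prop :=
  P M ∧ ∀ N : ModuleCat.{0} Λ, P N → ∀ g : X ⟶ N, ∃ h : M ⟶ N, ι ≫ h = g

/-- Vanishing of `Ext^i(X, Y)`. -/
def extZero (i : ℕ) (X Y : ModuleCat.{0} Λ) : Prop :=
  Subsingleton (((Ext ℤ (ModuleCat.{0} Λ) i).obj (op X)).obj Y)

/-- `P` is an `n`-cluster tilting subcategory of `mod-Λ`. -/
structure IsNClusterTilting (n : ℕ) (P : ModuleCat.{0} Λ → Prop) : Prop where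
  subcat_fg : ∀ X, P X → Module.Finite Λ X
  closed_iso : ∀ {X Y : ModuleCat.{0} Λ}, (X ≅ Y) → P X → P Y
  closed_biprod : ∀ {X Y : ModuleCat.{0} Λ}, P X → P Y → P (X ⊞ Y)
  closed_summand : ∀ {X Y : ModuleCat.{0} Λ} (s : X ⟶ Y) (r : Y ⟶ X),
      s ≫ r = 𝟙 X → P Y → P X
  contra_fin : ∀ X : ModuleCat.{0} Λ, Module.Finite Λ X →
      ∃ (M : ModuleCat.{0} Λ) (π : M ⟶ X), IsRightApprox Λ P π
  cov_fin : ∀ X : ModuleCat.{0} Λ, Module.Finite Λ X →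
      ∃ (M : ModuleCat.{0} Λ) (ι : X ⟶ M), IsLeftApprox Λ P ι
  generating : ∀ X : ModuleCat.{0} Λ, Module.Finite Λ X →
      ∃ (M : ModuleCat.{0} Λ) (π : M ⟶ X), P M ∧ Epi π
  cogenerating : ∀ X : ModuleCat.{0} Λ, Module.Finite Λ X →
      ∃ (M : ModuleCat.{0} Λ) (ι : X ⟶ M), P M ∧ Mono ι
  perp_right : ∀ X : ModuleCat.{0} Λ, Module.Finite Λ X →
      ((∀ M : ModuleCat.{0} Λ, P M → ∀ i, 0 < i → i < n → extZero Λ i M X) ↔ P X)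
  perp_left : ∀ X : ModuleCat.{0} Λ, Module.Finite Λ X →
      ((∀ M : ModuleCat.{0} Λ, P M → ∀ i, 0 < i → i < n → extZero Λ i X M) ↔ P X)

/-- `Λ` is self-injective: finitely generated projective and injective modules coincide. -/
def SelfInjective : Prop :=
  ∀ X : ModuleCat.{0} Λ, Module.Finite Λ X → (Projective X ↔ Injective X)

/-- The subcategory `M` as a category. -/
abbrev MCat (P : ModuleCat.{0} Λ → Prop) := ObjectProperty.FullSubcategory P

/-- Contravariant additive functors on `M`: the ambient category of `mod-M`. -/
abbrev DCat (P : ModuleCat.{0} Λ → Prop) := (MCat Λ P)ᵒᵖ ⥤ AddCommGrpCat.{0}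

/-- Covariant additive functors on `M`. -/
abbrev DCoCat (P : ModuleCat.{0} Λ → Prop) := MCat Λ P ⥤ AddCommGrpCat.{0}

/-- The restricted Yoneda functor `X ↦ Hom_Λ(-, X)|_M`. -/
def W (P : ModuleCat.{0} Λ → Prop) : ModuleCat.{0} Λ ⥤ DCat Λ P :=
  preadditiveYoneda ⋙ (Functor.whiskeringLeft _ _ _).obj (ObjectProperty.ι P).op

/-- The restricted co-Yoneda functor `X ↦ Hom_Λ(X, -)|_M`. -/
def Wco (P : ModuleCat.{0} Λ → Prop) : (ModuleCat.{0} Λ)ᵒᵖ ⥤ DCoCat Λ P :=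
  preadditiveCoyoneda ⋙ (Functor.whiskeringLeft _ _ _).obj (ObjectProperty.ι P)

/-- A finitely presented contravariant functor on `M`. -/
def FinPres (P : ModuleCat.{0} Λ → Prop) (F : DCat Λ P) : Prop :=
  ∃ (A B : MCat Λ P) (f : A ⟶ B), Nonempty (F ≅ cokernel (preadditiveYoneda.map f))

/-- A finitely presented covariant functor on `M`. -/
def CoFinPres (P : ModuleCat.{0} Λ → Prop) (G : DCoCat Λ P) : Prop :=
  ∃ (A B : MCat Λ P) (f : A ⟶ B), Nonempty (G ≅ cokernel (preadditiveCoyoneda.map f.op))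

/-- A contravariant functor vanishing on projectives. -/
def VanishOnProj (P : ModuleCat.{0} Λ → Prop) (F : DCat Λ P) : Prop :=
  ∀ M : MCat Λ P, Projective M.obj → IsZero (F.obj (op M))

/-- A covariant functor vanishing on injectives. -/
def VanishOnInj (P : ModuleCat.{0} Λ → Prop) (G : DCoCat Λ P) : Prop :=
  ∀ M : MCat Λ P, Injective M.obj → IsZero (G.obj M)

/-- The category `mod-M̲` of finitely presented contravariant functors on `M`
vanishing on projectives. -/
abbrev Bar (P : ModuleCat.{0} Λ → Prop) :=
  ObjectProperty.FullSubcategory (fun F : DCat Λ P => FinPres Λ P F ∧ VanishOnProj Λ P F)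

/-- The category `M̄-mod` of finitely presented covariant functors on `M`
vanishing on injectives. -/
abbrev BarCo (P : ModuleCat.{0} Λ → Prop) :=
  ObjectProperty.FullSubcategory (fun G : DCoCat Λ P => CoFinPres Λ P G ∧ VanishOnInj Λ P G)

/-! ### Morphism categories -/

/-- The morphism category `H(Λ)` of `mod-Λ`, modelled by composable arrows. -/
abbrev HCat := ComposableArrows (ModuleCat.{0} Λ) 1

/-- The underlying morphism of an object of the morphism category. -/
def arrowHom (f : HCat Λ) : f.obj' 0 ⟶ f.obj' 1 := f.map' 0 1

/-- Membership in the monomorphism category `S(M)`. -/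
def SPred (P : ModuleCat.{0} Λ → Prop) (f : HCat Λ) : Prop :=
  P (f.obj' 0) ∧ P (f.obj' 1) ∧ Mono (arrowHom Λ f)

/-- The monomorphism category `S(M)`. -/
abbrev SCat (P : ModuleCat.{0} Λ → Prop) := ObjectProperty.FullSubcategory (SPred Λ P)

/-- Membership in the epimorphism category `F(M)`. -/
def FPred (P : ModuleCat.{0} Λ → Prop) (f : HCat Λ) : Prop :=
  P (f.obj' 0) ∧ P (f.obj' 1) ∧ Epi (arrowHom Λ f)

/-- The epimorphism category `F(M)`. -/
abbrev FCat (P : ModuleCat.{0} Λ → Prop) := ObjectProperty.FullSubcategory (FPred Λ P)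

/-- The functor `S(M) → mod-M`-ambient, `f ↦ Coker M(-, f)`. -/
def UpsilonAmb (P : ModuleCat.{0} Λ → Prop) : SCat Λ P ⥤ DCat Λ P :=
  ObjectProperty.ι _ ⋙ (W Λ P).mapComposableArrows 1 ⋙ cokerFunctor (DCat Λ P)

/-- The functor `F(M) → mod-M`-ambient, `f ↦ Coker M(-, f)`. -/
def ThetaAmb (P : ModuleCat.{0} Λ → Prop) : FCat Λ P ⥤ DCat Λ P :=
  ObjectProperty.ι _ ⋙ (W Λ P).mapComposableArrows 1 ⋙ cokerFunctor (DCat Λ P)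

/-- The cokernel functor `S(Λ) → mod-Λ`. -/
def cokAmb : HCat Λ ⥤ ModuleCat.{0} Λ := cokerFunctor (ModuleCat.{0} Λ)

/-- Modules of proper `M`-dimension at most one. -/
def ProperDimLe1 (P : ModuleCat.{0} Λ → Prop) (X : ModuleCat.{0} Λ) : Prop :=
  Module.Finite Λ X ∧ ∃ (M₁ M₀ : ModuleCat.{0} Λ) (f : M₁ ⟶ M₀) (g : M₀ ⟶ X),
    P M₁ ∧ P M₀ ∧ Mono f ∧ Epi g ∧ Function.Exact f g ∧
    (∀ N : ModuleCat.{0} Λ, P N → ∀ u : N ⟶ X, ∃ v : N ⟶ M₀, v ≫ g = u)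

/-- Finitely presented functors on `M` of projective dimension at most one. -/
def PdLe1 (P : ModuleCat.{0} Λ → Prop) (F : DCat Λ P) : Prop :=
  ∃ (A B : MCat Λ P) (f : A ⟶ B), Mono (preadditiveYoneda.map f) ∧
    Nonempty (F ≅ cokernel (preadditiveYoneda.map f))

/-! ### `n`-exact sequences -/

/-- A sequence of `Λ`-modules. -/
structure Seq where
  obj : ℕ → ModuleCat.{0} Λ
  map : ∀ i : ℕ, obj i ⟶ obj (i + 1)

/-- `E` is an `n`-exact sequence `0 → E_0 → E_1 → ⋯ → E_{n+1} → 0` in `M`. -/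
def IsNExact (P : ModuleCat.{0} Λ → Prop) (n : ℕ) (E : Seq Λ) : Prop :=
  (∀ i ≤ n + 1, P (E.obj i)) ∧
  Mono (E.map 0) ∧ Epi (E.map n) ∧
  (∀ i < n, E.map i ≫ E.map (i + 1) = 0) ∧
  (∀ i < n, Function.Exact (E.map i) (E.map (i + 1))) ∧
  (∀ N : ModuleCat.{0} Λ, P N → ∀ i < n, ∀ g : N ⟶ E.obj (i + 1),
      g ≫ E.map (i + 1) = 0 → ∃ h : N ⟶ E.obj i, h ≫ E.map i = g) ∧
  (∀ N : ModuleCat.{0} Λ, P N → ∀ i < n, ∀ g : E.obj (i + 1) ⟶ N,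
      E.map i ≫ g = 0 → ∃ h : E.obj (i + 2) ⟶ N, E.map (i + 1) ≫ h = g)

/-- The sequence `E` begins with the morphism `f`. -/
def Extends (f : HCat Λ) (E : Seq Λ) : Prop :=
  ∃ (h0 : E.obj 0 = f.obj' 0) (h1 : E.obj 1 = f.obj' 1),
    E.map 0 = eqToHom h0 ≫ arrowHom Λ f ≫ eqToHom h1.symm

/-- The sequence `E` ends with the morphism `f`, the last map sitting in
degrees `n`, `n+1`. -/
def CoExtends (n : ℕ) (f : HCat Λ) (E : Seq Λ) : Prop :=
  ∃ (h0 : E.obj n = f.obj' 0) (h1 : E.obj (n + 1) = f.obj' 1),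
    E.map n = eqToHom h0 ≫ arrowHom Λ f ≫ eqToHom h1.symm

/-- An exact sequence `0 → E_0 → ⋯ → E_{n+1} → 0` of `Λ`-modules. -/
def ExactSeqN (n : ℕ) (E : Seq Λ) : Prop :=
  Mono (E.map 0) ∧ Epi (E.map n) ∧
  (∀ i < n, E.map i ≫ E.map (i + 1) = 0 ∧ Function.Exact (E.map i) (E.map (i + 1)))

/-- `P` is closed under `n`-th syzygies (the `nℤ`-condition). -/
def NZClosed (P : ModuleCat.{0} Λ → Prop) (n : ℕ) : Prop :=
  ∀ M : ModuleCat.{0} Λ, P M → ∃ E : Seq Λ, ExactSeqN Λ n E ∧ E.obj (n + 1) = M ∧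
    P (E.obj 0) ∧ ∀ i, 1 ≤ i → i ≤ n → Projective (E.obj i) ∧ Module.Finite Λ (E.obj i)

/-! ### Stable Hom-groups and Ext functors -/

/-- Morphisms factoring through a projective module. -/
def projFactorSub (X Y : ModuleCat.{0} Λ) : AddSubgroup (X ⟶ Y) where
  carrier := {f | ∃ (Q : ModuleCat.{0} Λ) (_ : Projective Q) (a : X ⟶ Q) (b : Q ⟶ Y), a ≫ b = f}
  zero_mem' := ⟨Projective.over Y, inferInstance, 0, Projective.π Y, by simp⟩
  add_mem' := by
    rintro f g ⟨Q, hQ, a, b, rfl⟩ ⟨Q', hQ', a', b', rfl⟩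
    exact ⟨Q ⊞ Q', by infer_instance, biprod.lift a a', biprod.desc b b', by simp⟩
  neg_mem' := by
    rintro f ⟨Q, hQ, a, b, rfl⟩
    exact ⟨Q, hQ, a, -b, by simp⟩

/-- Morphisms factoring through an injective module. -/
def injFactorSub (X Y : ModuleCat.{0} Λ) : AddSubgroup (X ⟶ Y) where
  carrier := {f | ∃ (Q : ModuleCat.{0} Λ) (_ : Injective Q) (a : X ⟶ Q) (b : Q ⟶ Y), a ≫ b = f}
  zero_mem' := ⟨Injective.under X, inferInstance, Injective.ι X, 0, by simp⟩
  add_mem' := by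
    rintro f g ⟨Q, hQ, a, b, rfl⟩ ⟨Q', hQ', a', b', rfl⟩
    exact ⟨Q ⊞ Q', by infer_instance, biprod.lift a a', biprod.desc b b', by simp⟩
  neg_mem' := by
    rintro f ⟨Q, hQ, a, b, rfl⟩
    exact ⟨Q, hQ, a, -b, by simp⟩

/-- The stable Hom group `Hom̲(X, Y)`. -/
abbrev stHom (X Y : ModuleCat.{0} Λ) := (X ⟶ Y) ⧸ projFactorSub Λ X Y

/-- The costable Hom group `Hom̄(X, Y)`. -/
abbrev costHom (X Y : ModuleCat.{0} Λ) := (X ⟶ Y) ⧸ injFactorSub Λ X Y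

/-- Precomposition as an additive map. -/
def precompHom {X' X Y : ModuleCat.{0} Λ} (f : X' ⟶ X) : (X ⟶ Y) →+ (X' ⟶ Y) :=
  AddMonoidHom.mk' (fun g => f ≫ g) (fun a b => by simp)

/-- The stable Hom functor `M̲(-, X)` on `M`. -/
def stHomFunctor (P : ModuleCat.{0} Λ → Prop) (X : ModuleCat.{0} Λ) :
    (MCat Λ P)ᵒᵖ ⥤ AddCommGrpCat.{0} where
  obj N := AddCommGrpCat.of (stHom Λ N.unop.obj X)
  map {N N'} f :=
    AddCommGrpCat.ofHom (QuotientAddGroup.map _ _ (precompHom Λ f.unop.hom) (by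
      rintro g ⟨Q, hQ, a, b, rfl⟩
      exact ⟨Q, hQ, f.unop.hom ≫ a, b, by simp [precompHom]⟩))
  map_id N := by
    ext x
    (try simp [precompHom]) <;> rfl
  map_comp {N N' N''} f g := by
    ext x
    (try simp [precompHom]) <;> rfl

/-- Postcomposition as an additive map. -/
def postcompHom {X Y Y' : ModuleCat.{0} Λ} (f : Y ⟶ Y') : (X ⟶ Y) →+ (X ⟶ Y') :=
  AddMonoidHom.mk' (fun g => g ≫ f) (fun a b => by simp)

/-- The costable Hom functor `M̄(X, -)` on `M`. -/
def costHomFunctor (P : ModuleCat.{0} Λ → Prop) (X : ModuleCat.{0} Λ) :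
    MCat Λ P ⥤ AddCommGrpCat.{0} where
  obj N := AddCommGrpCat.of (costHom Λ X N.obj)
  map {N N'} f :=
    AddCommGrpCat.ofHom (QuotientAddGroup.map _ _ (postcompHom Λ f.hom) (by
      rintro g ⟨Q, hQ, a, b, rfl⟩
      exact ⟨Q, hQ, a, b ≫ f.hom, by simp [postcompHom]⟩))
  map_id N := by
    ext x
    (try simp [postcompHom]) <;> rfl
  map_comp {N N' N''} f g := by
    ext x
    (try simp [postcompHom]) <;> rfl

/-- The restricted covariant Ext functor `Ext^k(X, -)|_M`. -/
def extCov (P : ModuleCat.{0} Λ → Prop) (k : ℕ) (X : ModuleCat.{0} Λ) :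
    MCat Λ P ⥤ AddCommGrpCat.{0} :=
  ObjectProperty.ι P ⋙ (Ext ℤ (ModuleCat.{0} Λ) k).obj (op X) ⋙
    forget₂ (ModuleCat ℤ) AddCommGrpCat

/-- The restricted contravariant Ext functor `Ext^k(-, X)|_M`. -/
def extContra (P : ModuleCat.{0} Λ → Prop) (k : ℕ) (X : ModuleCat.{0} Λ) :
    (MCat Λ P)ᵒᵖ ⥤ AddCommGrpCat.{0} :=
  (ObjectProperty.ι P).op ⋙ (Ext ℤ (ModuleCat.{0} Λ) k).flip.obj X ⋙
    forget₂ (ModuleCat ℤ) AddCommGrpCat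


/-- Relative projectivity with respect to the proper `M`-exact structure `F_M`. -/
def RelProjective (P : ModuleCat.{0} Λ → Prop) (X : ModuleCat.{0} Λ) : Prop :=
  ∀ (A B : ModuleCat.{0} Λ), Module.Finite Λ A → Module.Finite Λ B → ∀ g : A ⟶ B, Epi g →
    (∀ N : ModuleCat.{0} Λ, P N → ∀ u : N ⟶ B, ∃ v : N ⟶ A, v ≫ g = u) →
    ∀ u : X ⟶ B, ∃ v : X ⟶ A, v ≫ g = u

end Paper

namespace Paper

/-- An indecomposable module. -/
def Indecomp {A : Type} [Ring A] (N : ModuleCat.{0} A) : Prop :=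
  ¬ IsZero N ∧ ∀ (X Y : ModuleCat.{0} A), Nonempty (N ≅ X ⊞ Y) → IsZero X ∨ IsZero Y

/-- A ring is of finite representation type. -/
def FinRepType (A : Type) [Ring A] : Prop :=
  ∃ (m : ℕ) (I : Fin m → ModuleCat.{0} A), ∀ N : ModuleCat.{0} A,
    Module.Finite A N → Indecomp N → ∃ i, Nonempty (N ≅ I i)

end Paper

/-!
For an epimorphism `f : M₁ → M₂` in `M`, `Θ f = Coker M(-, f)` is a quotient of `M(-, M₂)`,
which is representable on `M`. Hence by Yoneda a map `Θ f → Θ g` is determined by the image of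
the class of `𝟙_{M₂}`; lifting it to `a : M₂ → N₂` and using exactness of
`M(-, N₁) → M(-, N₂) → Θ g` at `M₁` gives `b : M₁ → N₁` with `(b, a) : f → g`, so `Θ` is full.
In the same way `Θ φ = 0` forces `φ₁ = s ≫ g` for some `s : M₂ → N₁`, and then `φ` factors
through `(M₁ ⊕ N₁ → N₁) ≅ (N₁ --1--> N₁) ⊕ (M₁ → 0)`, a sum of generators of `V′`. Projective
modules are `Ext`-orthogonal to everything, so they lie in `M`; for `F = Coker M(-, h)` with
`h : A → B` vanishing on projectives, a projective cover `p : Q → B` therefore factors through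
`h`, and the epimorphism `(h, p) : A ⊕ Q → B` has the same cokernel: `Θ` is dense. The equivalence
`F(M)/V′ ≃ mod-M̲` is then formal: a full, dense additive functor whose kernel is the ideal of
maps factoring through sums of objects it kills induces an equivalence on that quotient.
-/

namespace Paper

universe u

section CokernelPointwise

variable {J : Type*} [Category J] {F G : J ⥤ AddCommGrpCat.{u}} (η : F ⟶ G)

lemma cokernel_π_app_surjective (j : J) : Function.Surjective ((cokernel.π η).app j) := by
  rw [← AddCommGrpCat.epi_iff_surjective]
  exact (NatTrans.epi_iff_epi_app _).1 inferInstance j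

lemma exists_app_eq_of_cokernel_π_app_eq_zero {j : J} {y : G.obj j}
    (hy : (cokernel.π η).app j y = 0) : ∃ x, η.app j x = y :=
  (ShortComplex.ab_exact_iff _).1
    ((ShortComplex.exact_cokernel η).map ((evaluation J AddCommGrpCat).obj j)) y hy

lemma isZero_cokernel_obj_of_surjective {j : J} (h : Function.Surjective (η.app j)) :
    IsZero ((cokernel η).obj j) := by
  rw [AddCommGrpCat.isZero_iff_subsingleton]
  refine subsingleton_of_forall_eq 0 fun y => ?_
  obtain ⟨x, rfl⟩ := cokernel_π_app_surjective η j y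
  obtain ⟨z, rfl⟩ := h x
  rw [← ConcreteCategory.comp_apply, ← NatTrans.comp_app, cokernel.condition]
  rfl

end CokernelPointwise

def cokernelIsoOfMutualFactorization {C : Type*} [Category C] [HasZeroMorphisms C] {X Y Z : C}
    {f : X ⟶ Z} {g : Y ⟶ Z} [HasCokernel f] [HasCokernel g] (e : Y ⟶ X) (s : X ⟶ Y)
    (he : e ≫ f = g) (hs : s ≫ g = f) : cokernel f ≅ cokernel g where
  hom := cokernel.desc f (cokernel.π g) (by
    rw [← hs, Category.assoc, cokernel.condition, comp_zero])
  inv := cokernel.desc g (cokernel.π f) (by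
    rw [← he, Category.assoc, cokernel.condition, comp_zero])

section AddClosureIdeal

variable {C D : Type*} [Category C] [Preadditive C] [Category D] [Preadditive D]
  (F : C ⥤ D) [F.Additive] {K : C → Prop}

lemma isZero_obj_of_addClosure (hK : ∀ X, K X → IsZero (F.obj X)) {X : C}
    (hX : AddClosure K X) : IsZero (F.obj X) := by
  induction hX with
  | of h => exact hK _ h
  | zero h => exact F.map_isZero h
  | biprod _ _ i₁ i₂ p₁ p₂ _ _ h ihX ihY =>
    rw [IsZero.iff_id_eq_zero, ← F.map_id, ← h, F.map_add, F.map_comp, F.map_comp,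
      ihX.eq_of_src (F.map i₁) 0, ihY.eq_of_src (F.map i₂) 0, comp_zero, comp_zero, add_zero]

lemma map_eq_zero_of_factorsThru (hK : ∀ X, K X → IsZero (F.obj X)) {X Y : C}
    {f : X ⟶ Y} (hf : FactorsThru (AddClosure K) f) : F.map f = 0 := by
  obtain ⟨Z, g, h, hZ, rfl⟩ := hf
  rw [F.map_comp, (isZero_obj_of_addClosure F hK hZ).eq_of_src (F.map h) 0, comp_zero]

variable (hK : ∀ X, K X → IsZero (F.obj X))
  (hker : ∀ ⦃X Y : C⦄ (f : X ⟶ Y), F.map f = 0 → FactorsThru (AddClosure K) f)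
include hK hker

lemma objective_of_factorsThru : Objective F := by
  intro X Y f hf
  obtain ⟨Z, g, h, hZ, rfl⟩ := hker f hf
  exact ⟨Z, g, h, rfl, isZero_obj_of_addClosure F hK hZ⟩

lemma idealRel_eq_homRel : idealRel K = F.homRel := by
  funext X Y u v
  apply propext
  rw [Functor.homRel_iff, ← sub_eq_zero, ← F.map_sub]
  exact ⟨map_eq_zero_of_factorsThru F hK, hker _⟩

lemma inducesEquivalence_of_full_of_dense [F.Full] (hF : Dense F) : InducesEquivalence K F := by
  have : F.EssSurj := ⟨fun Y => let ⟨X, hX⟩ := hF Y; ⟨X, hX⟩⟩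
  rw [InducesEquivalence, idealRel_eq_homRel F hK hker]
  exact ⟨_, Quotient.lift_spec _ _ _, inferInstance⟩

end AddClosureIdeal

section RestrictedYoneda

variable {Λ : Type} [Ring Λ] {P : ModuleCat.{0} Λ → Prop}

instance : (W Λ P).Additive where
  map_add := by intros; ext; exact Preadditive.comp_add (C := ModuleCat.{0} Λ) ..

lemma W_hom_ext {A : MCat Λ P} {F : DCat Λ P} {μ ν : (W Λ P).obj A.obj ⟶ F}
    (h : μ.app (op A) (𝟙 A.obj) = ν.app (op A) (𝟙 A.obj)) : μ = ν := by
  ext N t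
  let s : N.unop.obj ⟶ A.obj := t
  have hY : ∀ φ : (W Λ P).obj A.obj ⟶ F,
      φ.app N t = F.map (ObjectProperty.homMk s).op (φ.app (op A) (𝟙 A.obj)) := fun φ =>
    (congrArg (φ.app N) (Category.comp_id s).symm).trans
      (NatTrans.naturality_apply φ (ObjectProperty.homMk s).op (𝟙 A.obj :))
  exact (hY μ).trans (h ▸ (hY ν).symm)

lemma exists_W_map_comp_eq {A : MCat Λ P} {X : ModuleCat.{0} Λ} {H : DCat Λ P}
    (π : (W Λ P).obj X ⟶ H) [Epi π] (α : (W Λ P).obj A.obj ⟶ H) :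
    ∃ a : A.obj ⟶ X, (W Λ P).map a ≫ π = α := by
  obtain ⟨a, ha⟩ := ((AddCommGrpCat.epi_iff_surjective _).1
    ((NatTrans.epi_iff_epi_app π).1 inferInstance (op A))) (α.app (op A) (𝟙 A.obj))
  exact ⟨a, W_hom_ext
    ((congrArg (π.app (op A)) (Category.id_comp (show A.obj ⟶ X from a))).trans ha)⟩

lemma exists_comp_eq_of_W_map_comp_cokernel_π_eq_zero {A : MCat Λ P} {X Y : ModuleCat.{0} Λ}
    (g : X ⟶ Y) (c : A.obj ⟶ Y) (h : (W Λ P).map c ≫ cokernel.π ((W Λ P).map g) = 0) :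
    ∃ b : A.obj ⟶ X, b ≫ g = c := by
  have := ConcreteCategory.congr_hom (congr_app h (op A)) (𝟙 A.obj)
  simp only [NatTrans.comp_app, AddCommGrpCat.hom_comp, AddMonoidHom.coe_comp, zero_app,
    AddCommGrpCat.hom_zero] at this
  exact exists_app_eq_of_cokernel_π_app_eq_zero _ this

end RestrictedYoneda

section ClusterTilting

variable {Λ : Type} [Ring Λ] {P : ModuleCat.{0} Λ → Prop} {n : ℕ}

lemma IsNClusterTilting.mem_of_projective (hP : IsNClusterTilting Λ n P) (X : ModuleCat.{0} Λ)
    [Module.Finite Λ X] [Projective X] : P X := by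
  refine (hP.perp_left X inferInstance).1 fun M _ i hi _ => ?_
  obtain ⟨k, rfl⟩ : ∃ k, i = k + 1 := ⟨i - 1, by omega⟩
  exact ModuleCat.subsingleton_of_isZero (isZero_Ext_succ_of_projective X M k)

end ClusterTilting

section Theta

variable {Λ : Type} [Ring Λ] {P : ModuleCat.{0} Λ → Prop}

abbrev FCat.src (f : FCat Λ P) : MCat Λ P := ⟨f.obj.left, f.property.1⟩

abbrev FCat.tgt (f : FCat Λ P) : MCat Λ P := ⟨f.obj.right, f.property.2.1⟩

instance (f : FCat Λ P) : Epi f.obj.hom := f.property.2.2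

def FCat.mk {X Y : ModuleCat.{0} Λ} (a : X ⟶ Y) [Epi a] (hX : P X) (hY : P Y) : FCat Λ P :=
  ⟨ComposableArrows.mk₁ a, hX, hY, ‹Epi a›⟩

@[simp] lemma FCat.mk_left {X Y : ModuleCat.{0} Λ} (a : X ⟶ Y) [Epi a] (hX : P X) (hY : P Y) :
    (FCat.mk a hX hY).obj.left = X := rfl

@[simp] lemma FCat.mk_right {X Y : ModuleCat.{0} Λ} (a : X ⟶ Y) [Epi a] (hX : P X) (hY : P Y) :
    (FCat.mk a hX hY).obj.right = Y := rfl

@[simp] lemma FCat.mk_hom {X Y : ModuleCat.{0} Λ} (a : X ⟶ Y) [Epi a] (hX : P X) (hY : P Y) :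
    (FCat.mk a hX hY).obj.hom = a := rfl

def FCat.homMk {f g : FCat Λ P} (a₀ : f.obj.left ⟶ g.obj.left)
    (a₁ : f.obj.right ⟶ g.obj.right) (w : f.obj.hom ≫ a₁ = a₀ ≫ g.obj.hom) : f ⟶ g :=
  ObjectProperty.homMk (ComposableArrows.homMk₁ a₀ a₁ w)

def FCat.app₀ {f g : FCat Λ P} (φ : f ⟶ g) : f.obj.left ⟶ g.obj.left :=
  ComposableArrows.app' φ.hom 0

def FCat.app₁ {f g : FCat Λ P} (φ : f ⟶ g) : f.obj.right ⟶ g.obj.right :=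
  ComposableArrows.app' φ.hom 1

@[simp]
lemma FCat.app₁_add {f g : FCat Λ P} (u v : f ⟶ g) :
    FCat.app₁ (u + v) = FCat.app₁ u + FCat.app₁ v := rfl

lemma FCat.naturality {f g : FCat Λ P} (φ : f ⟶ g) :
    f.obj.hom ≫ FCat.app₁ φ = FCat.app₀ φ ≫ g.obj.hom :=
  φ.hom.naturality (homOfLE (by decide))

lemma FCat.hom_ext {f g : FCat Λ P} {u v : f ⟶ g}
    (h₀ : FCat.app₀ u = FCat.app₀ v) (h₁ : FCat.app₁ u = FCat.app₁ v) : u = v :=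
  InducedCategory.hom_ext (ComposableArrows.hom_ext₁ h₀ h₁)

def thetaπ (f : FCat Λ P) : (W Λ P).obj f.obj.right ⟶ (ThetaAmb Λ P).obj f :=
  cokernel.π ((W Λ P).map f.obj.hom)

instance (f : FCat Λ P) : Epi (thetaπ f) := inferInstanceAs (Epi (cokernel.π _))

lemma W_map_comp_thetaπ (f : FCat Λ P) : (W Λ P).map f.obj.hom ≫ thetaπ f = 0 :=
  cokernel.condition _

lemma thetaπ_comp_thetaAmb_map {f g : FCat Λ P} (φ : f ⟶ g) :
    thetaπ f ≫ (ThetaAmb Λ P).map φ = (W Λ P).map (FCat.app₁ φ) ≫ thetaπ g :=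
  cokernel.π_desc _ _ _

lemma exists_comp_eq_of_W_map_comp_thetaπ_eq_zero {A : MCat Λ P} {g : FCat Λ P}
    {c : A.obj ⟶ g.obj.right} (h : (W Λ P).map c ≫ thetaπ g = 0) :
    ∃ b : A.obj ⟶ g.obj.left, b ≫ g.obj.hom = c :=
  exists_comp_eq_of_W_map_comp_cokernel_π_eq_zero _ _ h

instance : (ThetaAmb Λ P).Additive where
  map_add {f g u v} := by
    rw [← cancel_epi (thetaπ f), Preadditive.comp_add, thetaπ_comp_thetaAmb_map,
      thetaπ_comp_thetaAmb_map, thetaπ_comp_thetaAmb_map, ← Preadditive.add_comp,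
      ← Functor.map_add, FCat.app₁_add]

lemma isZero_thetaAmb_obj_obj_of_lifts {f : FCat Λ P} {N : MCat Λ P}
    (h : ∀ u : N.obj ⟶ f.obj.right, ∃ v, v ≫ f.obj.hom = u) :
    IsZero (((ThetaAmb Λ P).obj f).obj (op N)) :=
  isZero_cokernel_obj_of_surjective _ h

def restrictedYonedaIso (A : MCat Λ P) : (W Λ P).obj A.obj ≅ preadditiveYoneda.obj A :=
  NatIso.ofComponents (fun N => AddEquiv.toAddCommGrpIso
    { toFun := fun t => ObjectProperty.homMk t, invFun := fun t => t.hom,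
      left_inv := fun _ => rfl, right_inv := fun _ => rfl, map_add' := fun _ _ => rfl })
    (fun _ => by ext; rfl)

def cokernelWIso {A B : MCat Λ P} (f : A ⟶ B) :
    cokernel ((W Λ P).map f.hom) ≅ cokernel (preadditiveYoneda.map f) :=
  cokernel.mapIso _ _ (restrictedYonedaIso A) (restrictedYonedaIso B) (by ext; rfl)

lemma thetaAmb_obj_mem (f : FCat Λ P) :
    FinPres Λ P ((ThetaAmb Λ P).obj f) ∧ VanishOnProj Λ P ((ThetaAmb Λ P).obj f) := by
  refine ⟨⟨f.src, f.tgt, ObjectProperty.homMk f.obj.hom,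
    ⟨cokernelWIso (ObjectProperty.homMk f.obj.hom : f.src ⟶ f.tgt)⟩⟩,
    fun N _ => isZero_thetaAmb_obj_obj_of_lifts fun u => ?_⟩
  exact ⟨Projective.factorThru u f.obj.hom, Projective.factorThru_comp _ _⟩

abbrev theta (Λ : Type) [Ring Λ] (P : ModuleCat.{0} Λ → Prop) : FCat Λ P ⥤ Bar Λ P :=
  ObjectProperty.lift _ (ThetaAmb Λ P) thetaAmb_obj_mem

instance : (ThetaAmb Λ P).Full where
  map_surjective {f g} χ := by
    obtain ⟨a, ha⟩ := exists_W_map_comp_eq (A := f.tgt) (thetaπ g) (thetaπ f ≫ χ)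
    obtain ⟨b, hb⟩ := exists_comp_eq_of_W_map_comp_thetaπ_eq_zero (A := f.src)
      (c := f.obj.hom ≫ a) (by
        rw [Functor.map_comp, Category.assoc, ha, ← Category.assoc, W_map_comp_thetaπ, zero_comp])
    refine ⟨FCat.homMk b a hb.symm, ?_⟩
    rw [← cancel_epi (thetaπ f), thetaπ_comp_thetaAmb_map]
    exact ha

lemma exists_comp_eq_of_thetaAmb_map_eq_zero {f g : FCat Λ P} {φ : f ⟶ g}
    (h : (ThetaAmb Λ P).map φ = 0) :
    ∃ s : f.obj.right ⟶ g.obj.left, s ≫ g.obj.hom = FCat.app₁ φ :=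
  exists_comp_eq_of_W_map_comp_thetaπ_eq_zero (A := f.tgt)
    (by rw [← thetaπ_comp_thetaAmb_map, h, comp_zero])

/-- The objects `(M --1--> M)` and `(M → 0)` generating the ideal `V′`. -/
def IsIsoOrToZero (f : FCat Λ P) : Prop := IsIso (arrowHom Λ f.obj) ∨ IsZero (f.obj.obj' 1)

lemma isZero_theta_obj {f : FCat Λ P} (hf : IsIsoOrToZero f) : IsZero ((theta Λ P).obj f) := by
  refine IsZero.of_full_of_faithful_of_isZero (ObjectProperty.ι _) _
    (Functor.isZero _ fun N => isZero_thetaAmb_obj_obj_of_lifts fun u => ?_)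
  rcases hf with hf | hf
  · exact ⟨u ≫ inv (arrowHom Λ f.obj), by simp [arrowHom]⟩
  · exact ⟨0, hf.eq_of_tgt _ _⟩

lemma addClosure_isIsoOrToZero_biprod_snd {n : ℕ} (hP : IsNClusterTilting Λ n P)
    {X Y : ModuleCat.{0} Λ} (hX : P X) (hY : P Y) :
    AddClosure IsIsoOrToZero (FCat.mk (biprod.snd : X ⊞ Y ⟶ Y) (hP.closed_biprod hX hY) hY) := by
  let T := ModuleCat.of Λ PUnit
  have hT : IsZero T := ModuleCat.isZero_of_subsingleton _
  have : Epi (0 : X ⟶ T) := ⟨fun u v _ => hT.eq_of_src u v⟩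
  refine AddClosure.biprod (X := FCat.mk (𝟙 Y) hY hY) (Y := FCat.mk (0 : X ⟶ T) hX
      (haveI := hT.projective; hP.mem_of_projective T))
    (.of (.inl (inferInstanceAs (IsIso (𝟙 Y))))) (.of (.inr hT))
    (FCat.homMk biprod.inr (𝟙 _) (by simp))
    (FCat.homMk biprod.inl 0 (zero_comp.trans biprod.inl_snd.symm))
    (FCat.homMk biprod.snd (𝟙 _) (by simp)) (FCat.homMk biprod.fst 0 (hT.eq_of_tgt _ _))
    ?_ ?_ ?_
  · exact FCat.hom_ext biprod.inr_snd (Category.id_comp _)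
  · exact FCat.hom_ext biprod.inl_fst (hT.eq_of_src _ _)
  · refine FCat.hom_ext ((add_comm _ _).trans biprod.total) ?_
    show 𝟙 Y ≫ 𝟙 Y + (0 : Y ⟶ T) ≫ (0 : T ⟶ Y) = 𝟙 Y
    simp

lemma factorsThru_of_app_one_eq_comp {n : ℕ} (hP : IsNClusterTilting Λ n P) {f g : FCat Λ P}
    (φ : f ⟶ g) {s : f.obj.right ⟶ g.obj.left}
    (hs : s ≫ g.obj.hom = FCat.app₁ φ) :
    FactorsThru (AddClosure IsIsoOrToZero) φ := by
  refine ⟨_, FCat.homMk (biprod.lift (𝟙 f.obj.left) (f.obj.hom ≫ s)) s (by simp),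
    FCat.homMk (biprod.desc (FCat.app₀ φ - f.obj.hom ≫ s) (𝟙 g.obj.left))
      g.obj.hom ?_, addClosure_isIsoOrToZero_biprod_snd hP f.src.2 g.src.2, ?_⟩
  · show (biprod.snd : f.obj.left ⊞ g.obj.left ⟶ g.obj.left) ≫ g.obj.hom = _
    apply biprod.hom_ext'
    · simp [← FCat.naturality, hs]
    · simp
  · refine FCat.hom_ext ?_ hs
    show biprod.lift (𝟙 _) (f.obj.hom ≫ s) ≫
      biprod.desc (FCat.app₀ φ - f.obj.hom ≫ s) (𝟙 _) = _
    simp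

lemma factorsThru_of_theta_map_eq_zero {n : ℕ} (hP : IsNClusterTilting Λ n P)
    ⦃f g : FCat Λ P⦄ (φ : f ⟶ g) (h : (theta Λ P).map φ = 0) :
    FactorsThru (AddClosure IsIsoOrToZero) φ := by
  obtain ⟨s, hs⟩ := exists_comp_eq_of_thetaAmb_map_eq_zero
    ((congrArg (ObjectProperty.ι _).map h).trans (Functor.map_zero _ _ _))
  exact factorsThru_of_app_one_eq_comp hP φ hs

lemma theta_dense {n : ℕ} (hP : IsNClusterTilting Λ n P) : Dense (theta Λ P) := by
  intro Y
  obtain ⟨A, B, f₀, ⟨e⟩⟩ := Y.property.1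
  have := hP.subcat_fg _ B.property
  obtain ⟨m, p, hp⟩ := Module.Finite.exists_fin' Λ B.obj
  let Q := ModuleCat.of Λ (Fin m → Λ)
  have : Projective Q := ModuleCat.projective_of_free (Pi.basisFun Λ (Fin m))
  have hQ : P Q := hP.mem_of_projective Q
  let q : Q ⟶ B.obj := ModuleCat.ofHom p
  have : Epi q := (ModuleCat.epi_iff_surjective _).2 hp
  have hz : IsZero ((cokernel ((W Λ P).map f₀.hom)).obj (op ⟨Q, hQ⟩)) :=
    (Y.property.2 ⟨Q, hQ⟩ ‹_›).of_iso
      (((evaluation _ _).obj _).mapIso (e ≪≫ (cokernelWIso f₀).symm)).symm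
  obtain ⟨t, ht⟩ := exists_comp_eq_of_W_map_comp_cokernel_π_eq_zero (A := ⟨Q, hQ⟩) f₀.hom q
    (W_hom_ext ((AddCommGrpCat.isZero_iff_subsingleton.1 hz).elim _ _))
  have : Epi (biprod.desc f₀.hom q) := epi_of_epi_fac (biprod.inr_desc _ _)
  let c : cokernel ((W Λ P).map (biprod.desc f₀.hom q)) ≅ cokernel ((W Λ P).map f₀.hom) :=
    cokernelIsoOfMutualFactorization ((W Λ P).map biprod.inl)
      ((W Λ P).map (biprod.desc (𝟙 _) t))
      (by rw [← Functor.map_comp, biprod.inl_desc])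
      (by rw [← Functor.map_comp]; congr 1; apply biprod.hom_ext' <;> simp [ht])
  exact ⟨FCat.mk (biprod.desc f₀.hom q) (hP.closed_biprod A.2 hQ) B.2,
    ⟨ObjectProperty.isoMk _ (c ≪≫ cokernelWIso f₀ ≪≫ e.symm)⟩⟩

end Theta

theorem statement13_general
    (Λ : Type) [Ring Λ]
    (n : ℕ) (P : ModuleCat.{0} Λ → Prop)
    (hP : IsNClusterTilting Λ n P) :
    ∃ Θ : FCat Λ P ⥤ Bar Λ P,
      Nonempty (Θ ⋙ ObjectProperty.ι _ ≅ ThetaAmb Λ P) ∧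
      Θ.Full ∧ Dense Θ ∧ Objective Θ ∧
      InducesEquivalence
        (fun f : FCat Λ P => IsIso (arrowHom Λ f.obj) ∨ IsZero (f.obj.obj' 1)) Θ := by
  have hK : ∀ f, IsIsoOrToZero f → IsZero ((theta Λ P).obj f) := fun _ => isZero_theta_obj
  have hker := factorsThru_of_theta_map_eq_zero hP
  exact ⟨theta Λ P, ⟨ObjectProperty.liftCompιIso _ _ _⟩, inferInstance, theta_dense hP,
    objective_of_factorsThru _ hK hker,
    inducesEquivalence_of_full_of_dense _ hK hker (theta_dense hP)⟩

/-- The functor `Θ : F(M) → mod-M̲`, `f ↦ Coker M(-, f)`, is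
full, dense and objective, and induces an equivalence `F(M)/V′ ≃ mod-M̲`. -/
theorem statement13 (R : Type) [CommRing R] [IsArtinianRing R]
    (Λ : Type) [Ring Λ] [Algebra R Λ] [Module.Finite R Λ]
    (n : ℕ) (hn : 0 < n) (P : ModuleCat.{0} Λ → Prop)
    (hP : IsNClusterTilting Λ n P) :
    ∃ Θ : FCat Λ P ⥤ Bar Λ P,
      Nonempty (Θ ⋙ ObjectProperty.ι _ ≅ ThetaAmb Λ P) ∧
      Θ.Full ∧ Dense Θ ∧ Objective Θ ∧
      InducesEquivalence
        (fun f : FCat Λ P => IsIso (arrowHom Λ f.obj) ∨ IsZero (f.obj.obj' 1)) Θ :=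
  statement13_general Λ n P hP
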